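/- arXiv:2511.12415 — 6 statements merged into one kernel-verified Lean document; each statement's English description precedes it below -/
import Mathlib

section
/- If the two-view imaging equation z_j X_j = z_i R X_i + t holds with depths z_i > 0 and z_j > 0, then the analytical depth formulas z_i ‖θ‖ = ‖X_j × t‖ and z_j ‖θ‖ = ‖(R X_i) × t‖ hold, where θ := (R X_i) × X_j. -/
/-! Substituting `t = zⱼ Xⱼ - zᵢ R Xᵢ`, the self cross products vanish, so `Xⱼ × t = zᵢ θ` and
`(R Xᵢ) × t = zⱼ θ`; taking norms gives the depth formulas. -/

open Matrix

noncomputable def enorm3 (v : Fin 3 → ℝ) : ℝ := Real.sqrt (v ⬝ᵥ v)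

lemma enorm3_smul (c : ℝ) (v : Fin 3 → ℝ) : enorm3 (c • v) = |c| * enorm3 v := by
  rw [enorm3, enorm3, smul_dotProduct, dotProduct_smul, smul_smul, smul_eq_mul, ← sq,
    Real.sqrt_mul (sq_nonneg c), Real.sqrt_sq_eq_abs]

section CrossProduct

variable {R : Type*} [CommRing R] (a b : Fin 3 → R) (r s : R)

lemma cross_smul_sub_smul_left : b ⨯₃ (s • b - r • a) = r • (a ⨯₃ b) := by
  rw [LinearMap.map_sub, LinearMap.map_smul, LinearMap.map_smul, cross_self, smul_zero,
    zero_sub, ← smul_neg, neg_cross]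

lemma cross_smul_sub_smul_right : a ⨯₃ (s • b - r • a) = s • (a ⨯₃ b) := by
  rw [LinearMap.map_sub, LinearMap.map_smul, LinearMap.map_smul, cross_self, smul_zero,
    sub_zero]

end CrossProduct

theorem stmt2_general (R : Matrix (Fin 3) (Fin 3) ℝ)
    (Xi Xj t : Fin 3 → ℝ) (zi zj : ℝ)
    (himg : zj • Xj = zi • R.mulVec Xi + t)
    (hzi : 0 < zi) (hzj : 0 < zj)
    (θ : Fin 3 → ℝ) (hθ : θ = (R.mulVec Xi) ⨯₃ Xj) :
    zi * enorm3 θ = enorm3 (Xj ⨯₃ t) ∧ zj * enorm3 θ = enorm3 ((R.mulVec Xi) ⨯₃ t) := by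
  obtain rfl : t = zj • Xj - zi • R.mulVec Xi := eq_sub_of_add_eq' himg.symm
  rw [cross_smul_sub_smul_left, cross_smul_sub_smul_right, enorm3_smul, enorm3_smul,
    abs_of_pos hzi, abs_of_pos hzj, hθ]
  exact ⟨rfl, rfl⟩

/-- If the two-view imaging equation `zⱼ Xⱼ = zᵢ R Xᵢ + t` holds with
positive depths, then `zᵢ ‖θ‖ = ‖Xⱼ × t‖` and `zⱼ ‖θ‖ = ‖(R Xᵢ) × t‖`,
where `θ := (R Xᵢ) × Xⱼ`. -/
theorem stmt2 (R : Matrix (Fin 3) (Fin 3) ℝ)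
    (hR : Rᵀ * R = 1) (hRdet : R.det = 1)
    (Xi Xj t : Fin 3 → ℝ) (zi zj : ℝ)
    (himg : zj • Xj = zi • R.mulVec Xi + t)
    (hzi : 0 < zi) (hzj : 0 < zj)
    (θ : Fin 3 → ℝ) (hθ : θ = (R.mulVec Xi) ⨯₃ Xj) :
    zi * enorm3 θ = enorm3 (Xj ⨯₃ t) ∧ zj * enorm3 θ = enorm3 ((R.mulVec Xi) ⨯₃ t) :=
  stmt2_general R Xi Xj t zi zj himg hzi hzj θ hθ
end

section
/- Suppose the two-view imaging equation z_j X_j = z_i R X_i + t holds and θ := (R X_i) × X_j ≠ 0. Then z_i > 0 if and only if θᵀ (X_j × t) > 0, and z_j > 0 if and only if θᵀ ((R X_i) × t) > 0; i.e., the chirality of each view is equivalent to θ having the same direction as X_j × t, respectively (R X_i) × t. -/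
/-!
Substituting `t = z_j X_j - z_i R X_i` kills the parallel terms of the cross products:
`X_j × t = z_i θ` and `(R X_i) × t = z_j θ`. Dotting with `θ` multiplies each depth by `‖θ‖² > 0`,
which preserves its sign.
-/

open Matrix

section CrossProduct

variable {R : Type*} [CommRing R] {a b t : Fin 3 → R} {za zb : R}

theorem cross_translation_eq_smul_cross_left (h : zb • b = za • a + t) :
    a ⨯₃ t = zb • (a ⨯₃ b) := by
  rw [eq_sub_of_add_eq' h.symm, map_sub, map_smul, map_smul, cross_self, smul_zero, sub_zero]

theorem cross_translation_eq_smul_cross_right (h : zb • b = za • a + t) :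
    b ⨯₃ t = za • (a ⨯₃ b) := by
  rw [eq_sub_of_add_eq' h.symm, map_sub, map_smul, map_smul, cross_self, smul_zero, zero_sub,
    ← cross_anticomm, smul_neg, neg_neg]

end CrossProduct

theorem Matrix.dotProduct_self_pos {n R : Type*} [Fintype n] [Ring R] [LinearOrder R]
    [IsStrictOrderedRing R] {v : n → R} (hv : v ≠ 0) : 0 < v ⬝ᵥ v :=
  (Fintype.sum_nonneg fun i => mul_self_nonneg (v i)).lt_of_ne'
    (dotProduct_self_eq_zero.not.mpr hv)

theorem stmt3_general (R : Matrix (Fin 3) (Fin 3) ℝ)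
    (Xi Xj t : Fin 3 → ℝ) (zi zj : ℝ)
    (himg : zj • Xj = zi • R.mulVec Xi + t)
    (θ : Fin 3 → ℝ) (hθ : θ = (R.mulVec Xi) ⨯₃ Xj) (hθne : θ ≠ 0) :
    (0 < zi ↔ 0 < θ ⬝ᵥ (Xj ⨯₃ t)) ∧ (0 < zj ↔ 0 < θ ⬝ᵥ ((R.mulVec Xi) ⨯₃ t)) := by
  have hθθ : 0 < θ ⬝ᵥ θ := dotProduct_self_pos hθne
  rw [cross_translation_eq_smul_cross_right himg, cross_translation_eq_smul_cross_left himg,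
    ← hθ, dotProduct_smul, dotProduct_smul, smul_eq_mul, smul_eq_mul,
    mul_pos_iff_of_pos_right hθθ, mul_pos_iff_of_pos_right hθθ]
  exact ⟨Iff.rfl, Iff.rfl⟩

/-- If the two-view imaging equation `zⱼ Xⱼ = zᵢ R Xᵢ + t` holds and
`θ := (R Xᵢ) × Xⱼ ≠ 0`, then `zᵢ > 0 ↔ θᵀ (Xⱼ × t) > 0` and
`zⱼ > 0 ↔ θᵀ ((R Xᵢ) × t) > 0`. -/
theorem stmt3 (R : Matrix (Fin 3) (Fin 3) ℝ)
    (hR : Rᵀ * R = 1) (hRdet : R.det = 1)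
    (Xi Xj t : Fin 3 → ℝ) (zi zj : ℝ)
    (himg : zj • Xj = zi • R.mulVec Xi + t)
    (θ : Fin 3 → ℝ) (hθ : θ = (R.mulVec Xi) ⨯₃ Xj) (hθne : θ ≠ 0) :
    (0 < zi ↔ 0 < θ ⬝ᵥ (Xj ⨯₃ t)) ∧ (0 < zj ↔ 0 < θ ⬝ᵥ ((R.mulVec Xi) ⨯₃ t)) :=
  stmt3_general R Xi Xj t zi zj himg θ hθ hθne
end

section
/- (Pair-of-pose-only constraint, non-pure-rotation case.) Suppose the two-view imaging equation z_j X_j = z_i R X_i + t holds with depths z_i > 0, z_j > 0 and t ≠ 0, and let t̂ := t/‖t‖. Then ‖(R X_i) × t̂‖ X_j = ‖X_j × t̂‖ R X_i + ‖θ‖ t̂, where θ := (R X_i) × X_j. -/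
open Matrix

section Imaging

variable {Y X t : Fin 3 → ℝ} {zi zj : ℝ}

lemma cross_translation_eq_smul_of_imaging_left (h : zj • X = zi • Y + t) :
    Y ⨯₃ t = zj • (Y ⨯₃ X) := by
  rw [eq_sub_of_add_eq' h.symm, map_sub, map_smul, map_smul, cross_self, smul_zero, sub_zero]

lemma cross_translation_eq_smul_of_imaging_right (h : zj • X = zi • Y + t) :
    X ⨯₃ t = zi • (Y ⨯₃ X) := by
  rw [eq_sub_of_add_eq' h.symm, map_sub, map_smul, map_smul, cross_self, smul_zero, zero_sub,
    ← neg_smul, ← cross_anticomm, smul_neg, neg_smul, neg_neg]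

lemma enorm3_cross_smul_eq_of_imaging (h : zj • X = zi • Y + t) (hzi : 0 ≤ zi) (hzj : 0 ≤ zj)
    {c : ℝ} (hc : 0 ≤ c) :
    enorm3 (Y ⨯₃ (c • t)) • X = enorm3 (X ⨯₃ (c • t)) • Y + enorm3 (Y ⨯₃ X) • (c • t) := by
  rw [map_smul, map_smul, cross_translation_eq_smul_of_imaging_left h,
    cross_translation_eq_smul_of_imaging_right h, smul_smul, smul_smul, enorm3_smul, enorm3_smul,
    abs_of_nonneg (mul_nonneg hc hzj), abs_of_nonneg (mul_nonneg hc hzi)]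
  calc (c * zj * enorm3 (Y ⨯₃ X)) • X = (c * enorm3 (Y ⨯₃ X)) • (zj • X) := by
        rw [smul_smul, mul_right_comm]
    _ = (c * enorm3 (Y ⨯₃ X)) • (zi • Y + t) := by rw [h]
    _ = (c * zi * enorm3 (Y ⨯₃ X)) • Y + enorm3 (Y ⨯₃ X) • (c • t) := by
        module

end Imaging

theorem stmt4_general (R : Matrix (Fin 3) (Fin 3) ℝ)
    (Xi Xj t : Fin 3 → ℝ) (zi zj : ℝ)
    (himg : zj • Xj = zi • R.mulVec Xi + t)
    (hzi : 0 < zi) (hzj : 0 < zj)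
    (θ : Fin 3 → ℝ) (hθ : θ = (R.mulVec Xi) ⨯₃ Xj)
    (that : Fin 3 → ℝ) (hthat : that = (enorm3 t)⁻¹ • t) :
    enorm3 ((R.mulVec Xi) ⨯₃ that) • Xj
      = enorm3 (Xj ⨯₃ that) • R.mulVec Xi + enorm3 θ • that := by
  subst hθ hthat
  exact enorm3_cross_smul_eq_of_imaging himg hzi.le hzj.le (inv_nonneg.2 (Real.sqrt_nonneg _))

/-- PPO constraint, non-pure-rotation case: if `zⱼ Xⱼ = zᵢ R Xᵢ + t` holds
with `zᵢ > 0`, `zⱼ > 0` and `t ≠ 0`, and `t̂ := t/‖t‖`, then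
`‖(R Xᵢ) × t̂‖ Xⱼ = ‖Xⱼ × t̂‖ R Xᵢ + ‖θ‖ t̂`, where `θ := (R Xᵢ) × Xⱼ`. -/
theorem stmt4 (R : Matrix (Fin 3) (Fin 3) ℝ)
    (hR : Rᵀ * R = 1) (hRdet : R.det = 1)
    (Xi Xj t : Fin 3 → ℝ) (zi zj : ℝ)
    (himg : zj • Xj = zi • R.mulVec Xi + t)
    (hzi : 0 < zi) (hzj : 0 < zj) (ht : t ≠ 0)
    (θ : Fin 3 → ℝ) (hθ : θ = (R.mulVec Xi) ⨯₃ Xj)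
    (that : Fin 3 → ℝ) (hthat : that = (enorm3 t)⁻¹ • t) :
    enorm3 ((R.mulVec Xi) ⨯₃ that) • Xj
      = enorm3 (Xj ⨯₃ that) • R.mulVec Xi + enorm3 θ • that :=
  stmt4_general R Xi Xj t zi zj himg hzi hzj θ hθ that hthat
end

section
/- (Corollary 4, Case 2, Holoplane degeneracy.) Let R ∈ SO(3), X_i, X_j ∈ ℝ³, set θ := (R X_i) × X_j and assume θ ≠ 0. If x ∈ ℝ³ satisfies θᵀ x = 0, then the vector S x := −(X_j × θ) × ((R X_i) × x) is a scalar multiple of X_j; equivalently X_j × (S x) = 0. (Hence any solution x of P^S x = 0 yields a zero pose-only reprojection residual.) -/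
open Matrix

theorem dotProduct_cross_eq_zero_of_cross_dotProduct_eq_zero {R : Type*} [CommRing R]
    {a b x : Fin 3 → R} (h : (a ⨯₃ b) ⬝ᵥ x = 0) : b ⬝ᵥ a ⨯₃ x = 0 := by
  rw [triple_product_permutation, triple_product_permutation, ← cross_anticomm, dotProduct_neg,
    dotProduct_comm, h, neg_zero]

/-- Expanding the outer product as `(u × v) × w = (u·w) v − (v·w) u`, the first term vanishes. -/
theorem neg_cross_cross_cross_eq_smul {R : Type*} [CommRing R] {a b x : Fin 3 → R}
    (h : (a ⨯₃ b) ⬝ᵥ x = 0) :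
    -((b ⨯₃ (a ⨯₃ b)) ⨯₃ (a ⨯₃ x)) = ((a ⨯₃ b) ⬝ᵥ (a ⨯₃ x)) • b := by
  rw [cross_cross_eq_smul_sub_smul, dotProduct_cross_eq_zero_of_cross_dotProduct_eq_zero h,
    zero_smul, zero_sub, neg_neg]

theorem stmt11_general (R : Matrix (Fin 3) (Fin 3) ℝ)
    (Xi Xj : Fin 3 → ℝ)
    (θ : Fin 3 → ℝ) (hθ : θ = (R.mulVec Xi) ⨯₃ Xj)
    (x : Fin 3 → ℝ) (hx : θ ⬝ᵥ x = 0) :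
    (∃ c : ℝ, -((Xj ⨯₃ θ) ⨯₃ ((R.mulVec Xi) ⨯₃ x)) = c • Xj) ∧
      Xj ⨯₃ (-((Xj ⨯₃ θ) ⨯₃ ((R.mulVec Xi) ⨯₃ x))) = 0 := by
  subst hθ
  have key := neg_cross_cross_cross_eq_smul hx
  refine ⟨⟨_, key⟩, ?_⟩
  rw [key, map_smul, cross_self, smul_zero]

/-- Corollary 4, Case 2, Holoplane degeneracy: let `θ := (R Xᵢ) × Xⱼ ≠ 0`.
If `θᵀ x = 0`, then `S x := −(Xⱼ × θ) × ((R Xᵢ) × x)` is a scalar multiple of `Xⱼ`;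
equivalently `Xⱼ × (S x) = 0`. -/
theorem stmt11 (R : Matrix (Fin 3) (Fin 3) ℝ)
    (hR : Rᵀ * R = 1) (hRdet : R.det = 1)
    (Xi Xj : Fin 3 → ℝ)
    (θ : Fin 3 → ℝ) (hθ : θ = (R.mulVec Xi) ⨯₃ Xj) (hθne : θ ≠ 0)
    (x : Fin 3 → ℝ) (hx : θ ⬝ᵥ x = 0) :
    (∃ c : ℝ, -((Xj ⨯₃ θ) ⨯₃ ((R.mulVec Xi) ⨯₃ x)) = c • Xj) ∧
      Xj ⨯₃ (-((Xj ⨯₃ θ) ⨯₃ ((R.mulVec Xi) ⨯₃ x))) = 0 :=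
  stmt11_general R Xi Xj θ hθ x hx
end

section
/- Let M be a real symmetric 3×3 matrix, and set p := tr(adj M) − tr(M)²/3 and q := −det M + tr(M)·tr(adj M)/3 − 2 tr(M)³/27. Then the Cardano discriminant is nonpositive: (q/2)² + (p/3)³ ≤ 0. -/
/-!
A real symmetric matrix is orthogonally diagonalizable with real eigenvalues `a, b, c`, and since
`tr`, `tr ∘ adj` and `det` are invariant under conjugation, they are the elementary symmetric
functions of `a, b, c`. In terms of these roots `(q/2)² + (p/3)³ = -((a - b)(b - c)(a - c))² / 108`.
-/

open Matrix

theorem cardano_discriminant_eq {K : Type*} [Field K] [CharZero K] (a b c : K) :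
    ((-(a * b * c) + (a + b + c) * (b * c + a * c + a * b) / 3 - 2 * (a + b + c) ^ 3 / 27) / 2) ^ 2
      + ((b * c + a * c + a * b - (a + b + c) ^ 2 / 3) / 3) ^ 3
      = -((a - b) * (b - c) * (a - c)) ^ 2 / 108 := by
  ring

theorem cardano_discriminant_nonpos {K : Type*} [Field K] [LinearOrder K] [IsStrictOrderedRing K]
    (a b c : K) :
    ((-(a * b * c) + (a + b + c) * (b * c + a * c + a * b) / 3 - 2 * (a + b + c) ^ 3 / 27) / 2) ^ 2
      + ((b * c + a * c + a * b - (a + b + c) ^ 2 / 3) / 3) ^ 3 ≤ 0 := by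
  rw [cardano_discriminant_eq]
  exact div_nonpos_of_nonpos_of_nonneg (neg_nonpos.2 (sq_nonneg _)) (by norm_num)

theorem Matrix.trace_adjugate_mul_mul_of_mul_eq_one {n R : Type*} [Fintype n] [DecidableEq n]
    [CommRing R] {U V : Matrix n n R} (D : Matrix n n R) (h : V * U = 1) :
    (U * D * V).adjugate.trace = D.adjugate.trace := by
  rw [adjugate_mul_distrib, adjugate_mul_distrib, trace_mul_comm, mul_assoc,
    ← adjugate_mul_distrib, h, adjugate_one, mul_one]

theorem Matrix.IsHermitian.trace_adjugate_eq_sum_prod_eigenvalues {n 𝕜 : Type*} [Fintype n]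
    [DecidableEq n] [RCLike 𝕜] {A : Matrix n n 𝕜} (hA : A.IsHermitian) :
    A.adjugate.trace = ∑ i, ∏ j ∈ Finset.univ.erase i, (hA.eigenvalues j : 𝕜) := by
  conv_lhs => rw [hA.spectral_theorem, Unitary.conjStarAlgAut_apply]
  rw [trace_adjugate_mul_mul_of_mul_eq_one _ (Unitary.coe_star_mul_self _), adjugate_diagonal,
    trace_diagonal]
  rfl

theorem Finset.sum_prod_erase_fin_three {R : Type*} [CommRing R] (d : Fin 3 → R) :
    ∑ i, ∏ j ∈ univ.erase i, d j = d 1 * d 2 + d 0 * d 2 + d 0 * d 1 := by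
  simp [Fin.sum_univ_three, ← filter_ne', Fin.prod_univ_three, prod_filter]

/-- for a real symmetric 3×3 matrix `M`, with
`p := tr(adj M) − tr(M)²/3` and `q := −det M + tr(M)·tr(adj M)/3 − 2 tr(M)³/27`,
the Cardano discriminant is nonpositive: `(q/2)² + (p/3)³ ≤ 0`. -/
theorem stmt14 (M : Matrix (Fin 3) (Fin 3) ℝ) (hM : Mᵀ = M)
    (p q : ℝ)
    (hp : p = (M.adjugate).trace - M.trace ^ 2 / 3)
    (hq : q = -M.det + M.trace * (M.adjugate).trace / 3 - 2 * M.trace ^ 3 / 27) :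
    (q / 2) ^ 2 + (p / 3) ^ 3 ≤ 0 := by
  have hH : M.IsHermitian := by
    rwa [IsHermitian, conjTranspose_eq_transpose_of_trivial]
  rw [hp, hq, hH.trace_eq_sum_eigenvalues, hH.det_eq_prod_eigenvalues,
    hH.trace_adjugate_eq_sum_prod_eigenvalues, Finset.sum_prod_erase_fin_three,
    Fin.sum_univ_three, Fin.prod_univ_three]
  simp only [RCLike.ofReal_real_eq_id, id]
  exact cardano_discriminant_nonpos _ _ _
end

section
/- (Closed-form minimum eigenvalue.) Let M be a real symmetric 3×3 matrix, set p := tr(adj M) − tr(M)²/3 and q := −det M + tr(M)·tr(adj M)/3 − 2 tr(M)³/27, and assume p < 0. Then λ_min := −2 √(−p/3) · cos( (1/3) · arccos( (q/2) · √(−27/p³) ) ) + tr(M)/3 is an eigenvalue of M, and every eigenvalue μ of M satisfies λ_min ≤ μ; i.e., λ_min is the smallest eigenvalue of M. -/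
/-!
Shifting by `tr M / 3` turns the characteristic polynomial of `M` into the depressed cubic
`y ^ 3 + p * y + q`. As `M` is symmetric this cubic has three real roots, so its discriminant
`-(4 p ^ 3 + 27 q ^ 2)` is nonnegative; with `p = -3 u ^ 2` this says `q = 2 u ^ 3 cos ψ` for
some `ψ ∈ [0, π]`. By the triple-angle formula `-2 u cos (ψ / 3)` is a root. Any root lies in
`[-2 u, 2 u]`, hence is `2 u cos α` with `α ∈ [0, π]` and `cos 3α = -cos ψ`; monotonicity of `cos`
on `[0, π]` forces `α ≤ π - ψ / 3`, i.e. the root is at least `-2 u cos (ψ / 3)`.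
-/

open Matrix Polynomial Real

theorem Matrix.exists_mulVec_eq_smul_iff_isRoot_charpoly {n R : Type*} [Fintype n] [DecidableEq n]
    [CommRing R] [IsDomain R] (M : Matrix n n R) (μ : R) :
    (∃ v ≠ 0, M *ᵥ v = μ • v) ↔ M.charpoly.IsRoot μ := by
  rw [IsRoot, eval_charpoly, ← exists_mulVec_eq_zero_iff]
  simp only [sub_mulVec, scalar_apply, diagonal_const_mulVec, sub_eq_zero, eq_comm]

theorem Matrix.eval_charpoly_fin_three {R : Type*} [CommRing R] (M : Matrix (Fin 3) (Fin 3) R)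
    (x : R) :
    M.charpoly.eval x = x ^ 3 - M.trace * x ^ 2 + M.adjugate.trace * x - M.det := by
  rw [eval_charpoly]
  simp [det_fin_three, trace_fin_three, adjugate_fin_three]
  ring

theorem Matrix.IsHermitian.eval_charpoly_real {n : Type*} [Fintype n] [DecidableEq n]
    {M : Matrix n n ℝ} (hM : M.IsHermitian) (x : ℝ) :
    M.charpoly.eval x = ∏ i, (x - hM.eigenvalues i) := by
  simp [hM.charpoly_eq, eval_prod]

theorem cubic_discrim_nonpos_of_eq_prod {p q a b c : ℝ}
    (h : ∀ y, y ^ 3 + p * y + q = (y - a) * (y - b) * (y - c)) :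
    4 * p ^ 3 + 27 * q ^ 2 ≤ 0 := by
  have h₀ := h 0
  have h₁ := h 1
  have hm := h (-1)
  have hc : c = -a - b := by linear_combination (h₁ + hm) / 2 - h₀
  have hp : p = a * b + a * c + b * c := by linear_combination (h₁ - hm) / 2
  have hq : q = -(a * b * c) := by linear_combination h₀
  have key : 4 * p ^ 3 + 27 * q ^ 2 = -((a - b) * (a - c) * (b - c)) ^ 2 := by
    subst hp hq hc; ring
  rw [key]
  exact neg_nonpos.mpr (sq_nonneg _)

theorem neg_two_mul_cos_div_three_cubic (u θ : ℝ) :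
    (-2 * u * cos (θ / 3)) ^ 3 - 3 * u ^ 2 * (-2 * u * cos (θ / 3)) + 2 * u ^ 3 * cos θ = 0 := by
  have h := cos_three_mul (θ / 3)
  rw [mul_div_cancel₀ θ three_ne_zero] at h
  linear_combination 2 * u ^ 3 * h

theorem abs_le_two_mul_of_cubic_eq_zero {u c y : ℝ} (hu : 0 < u) (hc : |c| ≤ 1)
    (hy : y ^ 3 - 3 * u ^ 2 * y + 2 * u ^ 3 * c = 0) : |y| ≤ 2 * u := by
  obtain ⟨hc₁, hc₂⟩ := abs_le.mp hc
  have hu₃ : 0 < u ^ 3 := pow_pos hu 3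
  refine abs_le.mpr ⟨?_, ?_⟩
  · by_contra! hlt
    have : (y + 2 * u) * (y - u) ^ 2 = 2 * u ^ 3 * (1 - c) := by linear_combination hy
    nlinarith [mul_pos (neg_pos.mpr (show y + 2 * u < 0 by linarith))
      (pow_pos (show 0 < u - y by linarith) 2)]
  · by_contra! hlt
    have : (y - 2 * u) * (y + u) ^ 2 = -(2 * u ^ 3 * (1 + c)) := by linear_combination hy
    nlinarith [mul_pos (show 0 < y - 2 * u by linarith) (pow_pos (show 0 < y + u by linarith) 2)]

theorem neg_cos_div_three_le_cos_of_cos_three_mul {ψ α : ℝ} (hψ₀ : 0 ≤ ψ) (hψ : ψ ≤ π)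
    (hα₀ : 0 ≤ α) (hα : α ≤ π) (h : cos (3 * α) = -cos ψ) : -cos (ψ / 3) ≤ cos α := by
  have hle : α ≤ π - ψ / 3 := by
    -- otherwise `π - ψ < 3 α - 2 π ≤ π` would be two points with the same cosine
    by_contra! hlt
    have := cos_lt_cos_of_nonneg_of_le_pi (x := π - ψ) (y := 3 * α - 2 * π)
      (by linarith) (by linarith) (by linarith)
    rw [cos_pi_sub, cos_sub_two_pi, h] at this
    exact lt_irrefl _ this
  rw [← cos_pi_sub]
  exact cos_le_cos_of_nonneg_of_le_pi hα₀ (by linarith) hle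

theorem neg_two_mul_cos_div_three_le_of_cubic_eq_zero {u ψ y : ℝ} (hu : 0 < u)
    (hψ₀ : 0 ≤ ψ) (hψ : ψ ≤ π) (hy : y ^ 3 - 3 * u ^ 2 * y + 2 * u ^ 3 * cos ψ = 0) :
    -2 * u * cos (ψ / 3) ≤ y := by
  have hy₂ := abs_le.mp (abs_le_two_mul_of_cubic_eq_zero hu (abs_cos_le_one ψ) hy)
  have h2u : 0 < 2 * u := by positivity
  set α := arccos (y / (2 * u))
  have hyα : y = 2 * u * cos α := by
    rw [cos_arccos (by rw [le_div_iff₀ h2u]; linarith) (by rw [div_le_one h2u]; linarith)]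
    field_simp
  have h3α : cos (3 * α) = -cos ψ := by
    have hz : 2 * u ^ 3 * (cos (3 * α) + cos ψ) = 0 := by
      rw [cos_three_mul]; rw [hyα] at hy; linear_combination hy
    linear_combination (mul_eq_zero.mp hz).resolve_left (by positivity)
  have := neg_cos_div_three_le_cos_of_cos_three_mul hψ₀ hψ (arccos_nonneg _) (arccos_le_pi _)
    h3α
  rw [hyα]
  nlinarith

/-- Viète's trigonometric formula for the smallest real root of `y ^ 3 + p * y + q`. -/
noncomputable def depressedCubicMinRoot (p q : ℝ) : ℝ :=
  -2 * √(-p / 3) * cos (arccos (q / 2 * √(-27 / p ^ 3)) / 3)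

theorem depressedCubic_trig_params {p q : ℝ} (hp : p < 0) :
    p = -3 * √(-p / 3) ^ 2 ∧ q = 2 * √(-p / 3) ^ 3 * (q / 2 * √(-27 / p ^ 3)) := by
  set u := √(-p / 3)
  have hu : 0 < u := sqrt_pos.mpr (by linarith)
  have hpu : p = -3 * u ^ 2 := by rw [sq_sqrt (by linarith)]; ring
  refine ⟨hpu, ?_⟩
  have : √(-27 / p ^ 3) = 1 / u ^ 3 := by
    rw [show -27 / p ^ 3 = (1 / u ^ 3) ^ 2 by rw [hpu]; field_simp; ring]
    exact sqrt_sq (by positivity)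
  rw [this]; field_simp

theorem isLeast_depressedCubicMinRoot {p q : ℝ} (hp : p < 0)
    (hdisc : 4 * p ^ 3 + 27 * q ^ 2 ≤ 0) :
    IsLeast {y | y ^ 3 + p * y + q = 0} (depressedCubicMinRoot p q) := by
  obtain ⟨hpu, hqc⟩ := depressedCubic_trig_params (q := q) hp
  set u := √(-p / 3)
  set c := q / 2 * √(-27 / p ^ 3)
  have hu : 0 < u := sqrt_pos.mpr (by linarith)
  have hc : |c| ≤ 1 := by
    have : 108 * u ^ 6 * (c ^ 2 - 1) ≤ 0 := by rw [hpu, hqc] at hdisc; linear_combination hdisc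
    exact abs_le_one_iff_mul_self_le_one.mpr (by nlinarith [pow_pos hu 6])
  obtain ⟨hc₁, hc₂⟩ := abs_le.mp hc
  have hψ := cos_arccos hc₁ hc₂
  have hmin : depressedCubicMinRoot p q = -2 * u * cos (arccos c / 3) := rfl
  refine ⟨?_, fun y (hy : y ^ 3 + p * y + q = 0) => ?_⟩
  · rw [Set.mem_ofPred, hmin, hpu, hqc]
    linear_combination neg_two_mul_cos_div_three_cubic u (arccos c) - 2 * u ^ 3 * hψ
  · refine neg_two_mul_cos_div_three_le_of_cubic_eq_zero hu (arccos_nonneg c) (arccos_le_pi c) ?_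
    rw [hψ]
    rw [hpu, hqc] at hy
    linear_combination hy

/-- closed-form minimum eigenvalue: for a real symmetric 3×3 matrix `M`,
with `p := tr(adj M) − tr(M)²/3 < 0` and
`q := −det M + tr(M)·tr(adj M)/3 − 2 tr(M)³/27`, the number
`λmin := −2 √(−p/3) cos((1/3) arccos((q/2) √(−27/p³))) + tr(M)/3`
is an eigenvalue of `M`, and every eigenvalue of `M` is at least `λmin`. -/
theorem stmt15 (M : Matrix (Fin 3) (Fin 3) ℝ) (hM : Mᵀ = M)
    (p q : ℝ)
    (hp : p = (M.adjugate).trace - M.trace ^ 2 / 3)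
    (hq : q = -M.det + M.trace * (M.adjugate).trace / 3 - 2 * M.trace ^ 3 / 27)
    (hpneg : p < 0)
    (lmin : ℝ)
    (hlmin : lmin = -2 * Real.sqrt (-p / 3) *
        Real.cos (Real.arccos (q / 2 * Real.sqrt (-27 / p ^ 3)) / 3) + M.trace / 3) :
    (∃ v : Fin 3 → ℝ, v ≠ 0 ∧ M.mulVec v = lmin • v) ∧
      ∀ μ : ℝ, (∃ v : Fin 3 → ℝ, v ≠ 0 ∧ M.mulVec v = μ • v) → lmin ≤ μ := by
  have hH : M.IsHermitian := by rwa [IsHermitian, conjTranspose_eq_transpose_of_trivial]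
  have hchar (x : ℝ) :
      M.charpoly.eval x = (x - M.trace / 3) ^ 3 + p * (x - M.trace / 3) + q := by
    rw [eval_charpoly_fin_three, hp, hq]; ring
  have hdisc : 4 * p ^ 3 + 27 * q ^ 2 ≤ 0 := by
    refine cubic_discrim_nonpos_of_eq_prod (a := hH.eigenvalues 0 - M.trace / 3)
      (b := hH.eigenvalues 1 - M.trace / 3) (c := hH.eigenvalues 2 - M.trace / 3) fun y => ?_
    have := hchar (y + M.trace / 3)
    rw [hH.eval_charpoly_real, Fin.prod_univ_three] at this
    linear_combination -this
  have heig (μ : ℝ) :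
      (∃ v ≠ 0, M *ᵥ v = μ • v) ↔ μ - M.trace / 3 ∈ {y | y ^ 3 + p * y + q = 0} := by
    rw [exists_mulVec_eq_smul_iff_isRoot_charpoly, IsRoot, hchar]; rfl
  have hleast := isLeast_depressedCubicMinRoot hpneg hdisc
  have hlmin' : lmin = depressedCubicMinRoot p q + M.trace / 3 := hlmin
  refine ⟨(heig lmin).2 (by rw [hlmin', add_sub_cancel_right]; exact hleast.1), fun μ hμ => ?_⟩
  linarith [hleast.2 ((heig μ).1 hμ)]
end
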